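/- arXiv:2001.03884 — 2 statements merged into one kernel-verified Lean document; each statement's English description precedes it below -/
import Mathlib

section
/- For a real m×n matrix A, define F : [0,1]^n → ℝ by F(α) = Σ_{ν∈{0,1}^n} rank(A^ν) · Π_{j=1}^n α_j^{ν_j} (1−α_j)^{1−ν_j}. Then F is nondecreasing in each coordinate: if α, α′ ∈ [0,1]^n satisfy α_i ≤ α′_i for every i, then F(α) ≤ F(α′). -/
/-!
`F` is the multilinear extension of the monotone function `ν ↦ rank(A^ν)` on `{0,1}^n`
(adding columns cannot lower the rank). In a single coordinate `α_i` a multilinear extension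
is affine, with slope `Σ_μ w(μ) (f(μ, 1) - f(μ, 0))`, where `μ` ranges over the other
coordinates and `w(μ) ≥ 0` is the product of the factors `α_j` or `1 - α_j`, `j ≠ i`. When `f`
is monotone the slope is nonnegative, so `F` increases as the coordinates are raised one at a
time from `α` to `α'`.
-/

noncomputable section

/-- the submatrix of `A` keeping the columns `i` with `ν i = true`. -/
def colSub {m n : ℕ} (A : Matrix (Fin m) (Fin n) ℝ) (ν : Fin n → Bool) :
    Matrix (Fin m) {i : Fin n // ν i = true} ℝ :=
  A.submatrix id Subtype.val

/-- `rank(A^ν)`, the rank of the submatrix of `A` formed by the columns `i` with `ν i = true`. -/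
def subRank {m n : ℕ} (A : Matrix (Fin m) (Fin n) ℝ) (ν : Fin n → Bool) : ℕ :=
  (colSub A ν).rank

/-- `F(α) = Σ_{ν ∈ {0,1}^n} rank(A^ν) · Π_j α_j^{ν_j} (1 − α_j)^{1 − ν_j}`. -/
def rankExpectation {m n : ℕ} (A : Matrix (Fin m) (Fin n) ℝ) (α : Fin n → ℝ) : ℝ :=
  ∑ ν : Fin n → Bool,
    (subRank A ν : ℝ) * ∏ j : Fin n, (if ν j then α j else 1 - α j)

open Function Equiv

theorem monotoneOn_pi_of_le_update {ι β γ : Type*} [Fintype ι] [DecidableEq ι]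
    [Preorder β] [Preorder γ] {I : Set β} {F : (ι → β) → γ}
    (hF : ∀ x ∈ Set.univ.pi (fun _ ↦ I), ∀ i, ∀ t ∈ I, x i ≤ t → F x ≤ F (update x i t)) :
    MonotoneOn F (Set.univ.pi fun _ ↦ I) := by
  intro x hx y hy hxy
  suffices ∀ s : Finset ι, F x ≤ F (s.piecewise y x) by
    simpa [Finset.piecewise_univ] using this Finset.univ
  intro s
  induction s using Finset.induction_on with
  | empty => rw [Finset.piecewise_empty]
  | insert i s hi ih =>
    rw [Finset.piecewise_insert]
    refine ih.trans (hF _ (s.piecewise_mem_set_pi hy hx) i (y i) (hy i trivial) ?_)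
    rw [Finset.piecewise_eq_of_notMem _ _ _ hi]
    exact hxy i

theorem monotone_funSplitAt_symm {ι β : Type*} [DecidableEq ι] [Preorder β] (i : ι) :
    Monotone (funSplitAt i β).symm := by
  rintro ⟨a, μ⟩ ⟨b, μ'⟩ ⟨hab, hμ⟩ j
  by_cases hj : j = i
  · subst hj; simpa [funSplitAt] using hab
  · simpa [funSplitAt, hj] using hμ ⟨j, hj⟩

section MultilinearExtension

variable {ι : Type*} [Fintype ι]

def bernoulliWeight (α : ι → ℝ) (ν : ι → Bool) : ℝ :=
  ∏ j, if ν j then α j else 1 - α j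

theorem bernoulliWeight_nonneg {α : ι → ℝ} (hα : ∀ j, α j ∈ Set.Icc (0 : ℝ) 1)
    (ν : ι → Bool) : 0 ≤ bernoulliWeight α ν :=
  Finset.prod_nonneg fun j _ ↦ by
    obtain ⟨h0, h1⟩ := hα j
    split <;> linarith

variable [DecidableEq ι]

def multilinearExtension (f : (ι → Bool) → ℝ) (α : ι → ℝ) : ℝ :=
  ∑ ν, f ν * bernoulliWeight α ν

theorem bernoulliWeight_funSplitAt_symm (α : ι → ℝ) (i : ι) (b : Bool)
    (μ : {j // j ≠ i} → Bool) :
    bernoulliWeight α ((funSplitAt i Bool).symm (b, μ)) =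
      (if b then α i else 1 - α i) * bernoulliWeight (fun j : {j // j ≠ i} ↦ α j) μ := by
  rw [bernoulliWeight, Fintype.prod_eq_mul_prod_subtype_ne _ i]
  congr 1
  · simp [funSplitAt]
  · exact Finset.prod_congr rfl fun j _ ↦ by simp [funSplitAt, j.2]

theorem multilinearExtension_update (f : (ι → Bool) → ℝ) (α : ι → ℝ) (i : ι) (t : ℝ) :
    multilinearExtension f (update α i t) =
      ∑ μ : {j // j ≠ i} → Bool, bernoulliWeight (fun j : {j // j ≠ i} ↦ α j) μ *
        ((1 - t) * f ((funSplitAt i Bool).symm (false, μ)) +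
          t * f ((funSplitAt i Bool).symm (true, μ))) := by
  have hrest : (fun j : {j // j ≠ i} ↦ update α i t j) = fun j : {j // j ≠ i} ↦ α j :=
    funext fun j ↦ update_of_ne j.2 _ _
  rw [multilinearExtension, ← (funSplitAt i Bool).symm.sum_comp, Fintype.sum_prod_type,
    Fintype.sum_bool, ← Finset.sum_add_distrib]
  refine Finset.sum_congr rfl fun μ _ ↦ ?_
  simp only [bernoulliWeight_funSplitAt_symm, update_self, hrest, if_true, Bool.false_eq_true,
    if_false]
  ring

theorem monotone_multilinearExtension_update {f : (ι → Bool) → ℝ} (hf : Monotone f)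
    (i : ι) {α : ι → ℝ} (hα : ∀ j ≠ i, α j ∈ Set.Icc (0 : ℝ) 1) :
    Monotone fun t ↦ multilinearExtension f (update α i t) := by
  intro s t hst
  simp only [multilinearExtension_update]
  refine Finset.sum_le_sum fun μ _ ↦ mul_le_mul_of_nonneg_left ?_ ?_
  · have := hf (monotone_funSplitAt_symm i (Prod.mk_le_mk.mpr ⟨Bool.false_le true, le_refl μ⟩))
    nlinarith
  · exact bernoulliWeight_nonneg (fun j ↦ hα j.1 j.2) μ

theorem monotoneOn_multilinearExtension {f : (ι → Bool) → ℝ} (hf : Monotone f) :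
    MonotoneOn (multilinearExtension f) (Set.univ.pi fun _ ↦ Set.Icc 0 1) :=
  monotoneOn_pi_of_le_update fun α hα i t _ hle ↦ by
    simpa only [update_eq_self] using
      monotone_multilinearExtension_update hf i (fun j _ ↦ hα j trivial) hle

end MultilinearExtension

theorem subRank_monotone {m n : ℕ} (A : Matrix (Fin m) (Fin n) ℝ) : Monotone (subRank A) := by
  intro ν ν' h
  rw [subRank, subRank, Matrix.rank_eq_finrank_span_cols, Matrix.rank_eq_finrank_span_cols]
  refine Submodule.finrank_mono (Submodule.span_mono ?_)
  rintro _ ⟨⟨j, hj⟩, rfl⟩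
  exact ⟨⟨j, Bool.le_iff_imp.mp (h j) hj⟩, rfl⟩

theorem rankExpectation_eq_multilinearExtension {m n : ℕ} (A : Matrix (Fin m) (Fin n) ℝ) :
    rankExpectation A = multilinearExtension fun ν ↦ (subRank A ν : ℝ) :=
  rfl

/-- The expected rank `F(α) = Σ_ν rank(A^ν) Π_j α_j^{ν_j}(1-α_j)^{1-ν_j}`
is nondecreasing in each coordinate of `α` on `[0,1]^n`. -/
theorem rankExpectation_monotone {m n : ℕ} (A : Matrix (Fin m) (Fin n) ℝ)
    (α α' : Fin n → ℝ)
    (hα : ∀ i, α i ∈ Set.Icc (0 : ℝ) 1) (hα' : ∀ i, α' i ∈ Set.Icc (0 : ℝ) 1)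
    (hle : ∀ i, α i ≤ α' i) :
    rankExpectation A α ≤ rankExpectation A α' := by
  rw [rankExpectation_eq_multilinearExtension]
  exact monotoneOn_multilinearExtension (fun _ _ h ↦ Nat.cast_le.mpr (subRank_monotone A h))
    (fun i _ ↦ hα i) (fun i _ ↦ hα' i) hle

end
end

section
/- Let X be a random vector in ℝ^n with absolutely continuous distribution such that h(X) > −∞ and E‖X‖_α^β < ∞ for some α, β > 0. Let V be an n×n orthogonal matrix and, for 1 ≤ k < n, let V_k be the n×k matrix consisting of its first k columns. Then V_kᵀX has an absolutely continuous distribution on ℝ^k and h(V_kᵀ X) > −∞. -/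
open MeasureTheory ProbabilityTheory Real Filter
open scoped ENNReal

noncomputable section

/-!
Rotating by `Vᵀ` preserves Lebesgue measure, hence also `∫ (log f)⁺ dμ`, and turns `V_kᵀ X` into
the first block `U` of coordinates of `(U, W) = VᵀX`. If `f` is the density of `(U, W)` and `g`
that of `U`, then for any positive integrable `q` on the `W`-space
`g(u) = f(u, w) · (g(u) q(w) / f(u, w)) · q(w)⁻¹`. Taking `(log ·)⁺` and integrating against the
law of `(U, W)`, the first term is finite by assumption, the second is at most `∫ g ⊗ q < ∞` by
Gibbs' inequality, and for `q(w) = (1 + ‖w‖)^{-(n - k + 1)}` the third is a multiple of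
`E log (1 + ‖W‖)`, which the `β`-th moment controls.
-/

namespace ENNReal

lemma ofReal_log_mul_le (x y : ℝ) :
    ENNReal.ofReal (Real.log (x * y))
      ≤ ENNReal.ofReal (Real.log x) + ENNReal.ofReal (Real.log y) := by
  rcases eq_or_ne x 0 with rfl | hx
  · simp
  rcases eq_or_ne y 0 with rfl | hy
  · simp
  rw [Real.log_mul hx hy]
  exact ENNReal.ofReal_add_le

lemma ofReal_mul_ofReal_log_div_le (a : ℝ) {s : ℝ} (hs : 0 ≤ s) :
    ENNReal.ofReal a * ENNReal.ofReal (Real.log (s / a)) ≤ ENNReal.ofReal s := by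
  rcases le_or_gt a 0 with ha | ha
  · simp [ENNReal.ofReal_eq_zero.2 ha]
  rw [← ENNReal.ofReal_mul ha.le]
  refine ENNReal.ofReal_le_ofReal ?_
  rcases hs.eq_or_lt with rfl | hs
  · simp
  calc a * Real.log (s / a) ≤ a * (s / a - 1) :=
        mul_le_mul_of_nonneg_left (Real.log_le_sub_one_of_pos (by positivity)) ha.le
    _ = s - a := by field_simp
    _ ≤ s := by linarith

end ENNReal

lemma Real.log_one_add_le_log_two_add_rpow_div {t β : ℝ} (ht : 0 ≤ t) (hβ : 0 < β) :
    log (1 + t) ≤ log 2 + t ^ β / β := by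
  rcases le_or_gt t 1 with h | h
  · have : 0 ≤ t ^ β / β := by positivity
    have : log (1 + t) ≤ log 2 := Real.log_le_log (by positivity) (by linarith)
    linarith
  · have ht0 : 0 < t := one_pos.trans h
    have h1 : log (1 + t) ≤ log 2 + log t := by
      rw [← Real.log_mul two_ne_zero ht0.ne']
      exact Real.log_le_log (by positivity) (by linarith)
    have h2 : log t ≤ t ^ β / β := by
      rw [le_div_iff₀ hβ, mul_comm, ← Real.log_rpow ht0]
      linarith [Real.log_le_sub_one_of_pos (Real.rpow_pos_of_pos ht0 β)]
    linarith

lemma pi_norm_rpow_le_sum_abs_rpow_rpow {ι : Type*} [Fintype ι] (x : ι → ℝ) {α β : ℝ}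
    (hα : 0 < α) (hβ : 0 ≤ β) : ‖x‖ ^ β ≤ (∑ i, |x i| ^ α) ^ (β / α) := by
  have hS : 0 ≤ ∑ i, |x i| ^ α := by positivity
  have hx : ‖x‖ ≤ (∑ i, |x i| ^ α) ^ α⁻¹ := by
    refine (pi_norm_le_iff_of_nonneg (by positivity)).2 fun i => ?_
    rw [Real.norm_eq_abs, ← Real.rpow_le_rpow_iff (abs_nonneg _) (by positivity) hα,
      ← Real.rpow_mul hS, inv_mul_cancel₀ hα.ne', Real.rpow_one]
    exact Finset.single_le_sum (f := fun i => |x i| ^ α) (fun i _ => by positivity)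
      (Finset.mem_univ i)
  calc ‖x‖ ^ β ≤ ((∑ i, |x i| ^ α) ^ α⁻¹) ^ β := by gcongr
    _ = (∑ i, |x i| ^ α) ^ (β / α) := by rw [← Real.rpow_mul hS, inv_mul_eq_div]

namespace MeasureTheory

variable {α : Type*} [MeasurableSpace α]

/-- `∫ (log (dμ/dρ))⁺ dμ`, the positive part of `-h(μ)`: `h(μ) > -∞` says it is finite. -/
def posLogDensityIntegral (μ ρ : Measure α) : ℝ≥0∞ :=
  ∫⁻ x, ENNReal.ofReal (Real.log (μ.rnDeriv ρ x).toReal) ∂μ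

variable {β : Type*} [MeasurableSpace β]

lemma MeasurePreserving.posLogDensityIntegral_map {μ ρ : Measure α} {ρ' : Measure β}
    [SigmaFinite μ] [SigmaFinite ρ] {e : α ≃ᵐ β} (he : MeasurePreserving e ρ ρ')
    (hμ : μ ≪ ρ) :
    posLogDensityIntegral (μ.map e) ρ' = posLogDensityIntegral μ ρ := by
  rw [posLogDensityIntegral, posLogDensityIntegral, lintegral_map_equiv, ← he.map_eq]
  refine lintegral_congr_ae ?_
  filter_upwards [hμ.ae_le (e.measurableEmbedding.rnDeriv_map μ ρ)] with x hx
  rw [hx]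

lemma lintegral_ofReal_log_div_rnDeriv_le {μ ρ : Measure α} [SigmaFinite μ] [SigmaFinite ρ]
    (hμ : μ ≪ ρ) {h : α → ℝ} (hh : Measurable h) (h_nonneg : ∀ x, 0 ≤ h x) :
    ∫⁻ x, ENNReal.ofReal (Real.log (h x / (μ.rnDeriv ρ x).toReal)) ∂μ
      ≤ ∫⁻ x, ENNReal.ofReal (h x) ∂ρ := by
  rw [← lintegral_rnDeriv_mul hμ (by fun_prop)]
  refine lintegral_mono_ae ?_
  filter_upwards [μ.rnDeriv_lt_top ρ] with x hx
  calc μ.rnDeriv ρ x * _ = ENNReal.ofReal (μ.rnDeriv ρ x).toReal * _ := by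
        rw [ENNReal.ofReal_toReal hx.ne]
    _ ≤ _ := ENNReal.ofReal_mul_ofReal_log_div_le _ (h_nonneg x)

lemma Measure.AbsolutelyContinuous.map_fst {μ : Measure (α × β)} {ρ : Measure α}
    {ρ' : Measure β} (hμ : μ ≪ ρ.prod ρ') : μ.map Prod.fst ≪ ρ :=
  (hμ.map measurable_fst).trans Measure.quasiMeasurePreserving_fst.absolutelyContinuous

theorem posLogDensityIntegral_map_fst_lt_top {μ : Measure (α × β)} [IsFiniteMeasure μ]
    {ρ : Measure α} {ρ' : Measure β} [SigmaFinite ρ] [SigmaFinite ρ'] (hμ : μ ≪ ρ.prod ρ')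
    (hμ_ent : posLogDensityIntegral μ (ρ.prod ρ') < ⊤)
    {q : β → ℝ} (hq : Measurable q) (hq_pos : ∀ y, 0 < q y)
    (hq_int : ∫⁻ y, ENNReal.ofReal (q y) ∂ρ' < ⊤)
    (hμ_q : ∫⁻ p, ENNReal.ofReal (Real.log (q p.2)⁻¹) ∂μ < ⊤) :
    posLogDensityIntegral (μ.map Prod.fst) ρ < ⊤ := by
  set g := (μ.map Prod.fst).rnDeriv ρ
  set f := μ.rnDeriv (ρ.prod ρ')
  have hsplit : ∀ᵐ p ∂μ, ENNReal.ofReal (Real.log (g p.1).toReal)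
      ≤ ENNReal.ofReal (Real.log (f p).toReal)
        + ENNReal.ofReal (Real.log ((g p.1).toReal * q p.2 / (f p).toReal))
        + ENNReal.ofReal (Real.log (q p.2)⁻¹) := by
    filter_upwards [Measure.rnDeriv_pos hμ, hμ.ae_le (μ.rnDeriv_lt_top (ρ.prod ρ'))]
      with p hf_pos hf_top
    have hf : (f p).toReal ≠ 0 := (ENNReal.toReal_pos hf_pos.ne' hf_top.ne).ne'
    have : (g p.1).toReal
        = (f p).toReal * ((g p.1).toReal * q p.2 / (f p).toReal) * (q p.2)⁻¹ := by
      field_simp [(hq_pos p.2).ne']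
    conv_lhs => rw [this]
    calc _ ≤ _ + _ := ENNReal.ofReal_log_mul_le _ _
      _ ≤ _ := by gcongr; exact ENNReal.ofReal_log_mul_le _ _
  have hcross : ∫⁻ p, ENNReal.ofReal (Real.log ((g p.1).toReal * q p.2 / (f p).toReal)) ∂μ
      < ⊤ := by
    refine (lintegral_ofReal_log_div_rnDeriv_le hμ (by fun_prop)
      fun p => mul_nonneg ENNReal.toReal_nonneg (hq_pos p.2).le).trans_lt ?_
    simp_rw [ENNReal.ofReal_mul ENNReal.toReal_nonneg]
    rw [lintegral_prod_mul (f := fun x => ENNReal.ofReal (g x).toReal)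
      (g := fun y => ENNReal.ofReal (q y)) (by fun_prop) (by fun_prop)]
    refine ENNReal.mul_lt_top ((lintegral_mono fun x => ENNReal.ofReal_toReal_le).trans_lt ?_)
      hq_int
    rw [Measure.lintegral_rnDeriv hμ.map_fst]
    exact measure_lt_top _ _
  calc posLogDensityIntegral (μ.map Prod.fst) ρ
      = ∫⁻ p, ENNReal.ofReal (Real.log (g p.1).toReal) ∂μ :=
        lintegral_map (by fun_prop) measurable_fst
    _ ≤ _ := lintegral_mono_ae hsplit
    _ = posLogDensityIntegral μ (ρ.prod ρ')
          + ∫⁻ p, ENNReal.ofReal (Real.log ((g p.1).toReal * q p.2 / (f p).toReal)) ∂μ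
          + ∫⁻ p, ENNReal.ofReal (Real.log (q p.2)⁻¹) ∂μ := by
        rw [lintegral_add_left (by fun_prop), lintegral_add_left (by fun_prop)]
        rfl
    _ < ⊤ := by finiteness

open Module in
theorem posLogDensityIntegral_map_fst_lt_top_of_log_moment {E : Type*}
    [NormedAddCommGroup E] [NormedSpace ℝ E] [FiniteDimensional ℝ E]
    [MeasurableSpace E] [BorelSpace E]
    {μ : Measure (α × E)} [IsFiniteMeasure μ] {ρ : Measure α} {ρ' : Measure E} [SigmaFinite ρ]
    [ρ'.IsAddHaarMeasure] (hμ : μ ≪ ρ.prod ρ')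
    (hμ_ent : posLogDensityIntegral μ (ρ.prod ρ') < ⊤)
    (hμ_mom : ∫⁻ p, ENNReal.ofReal (Real.log (1 + ‖p.2‖)) ∂μ < ⊤) :
    posLogDensityIntegral (μ.map Prod.fst) ρ < ⊤ := by
  set r : ℝ := finrank ℝ E + 1
  have hlog (y : E) : Real.log ((1 + ‖y‖) ^ (-r))⁻¹ = r * Real.log (1 + ‖y‖) := by
    rw [Real.rpow_neg (by positivity), inv_inv, Real.log_rpow (by positivity)]
  refine posLogDensityIntegral_map_fst_lt_top hμ hμ_ent (q := fun y => (1 + ‖y‖) ^ (-r))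
    (by fun_prop) (fun y => by positivity) (finite_integral_one_add_norm (by linarith)) ?_
  simp_rw [hlog, ENNReal.ofReal_mul (by positivity : (0 : ℝ) ≤ r)]
  rw [lintegral_const_mul' _ _ ENNReal.ofReal_ne_top]
  exact ENNReal.mul_lt_top ENNReal.ofReal_lt_top hμ_mom

lemma lintegral_ofReal_log_one_add_norm_lt_top {E F : Type*} [SeminormedAddCommGroup E]
    [SeminormedAddCommGroup F] [MeasurableSpace E] {μ : Measure E} [IsFiniteMeasure μ]
    {β C : ℝ} (hβ : 0 < β) (hC : 0 ≤ C) {f : E → F} (hf : ∀ x, ‖f x‖ ≤ C * ‖x‖)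
    (hμ_mom : ∫⁻ x, ENNReal.ofReal (‖x‖ ^ β) ∂μ < ⊤) :
    ∫⁻ x, ENNReal.ofReal (Real.log (1 + ‖f x‖)) ∂μ < ⊤ := by
  have hpt : ∀ x, ENNReal.ofReal (Real.log (1 + ‖f x‖))
      ≤ ENNReal.ofReal (Real.log 2)
        + ENNReal.ofReal (C ^ β / β) * ENNReal.ofReal (‖x‖ ^ β) := by
    intro x
    rw [← ENNReal.ofReal_mul (by positivity)]
    refine (ENNReal.ofReal_le_ofReal ?_).trans ENNReal.ofReal_add_le
    calc Real.log (1 + ‖f x‖) ≤ Real.log 2 + ‖f x‖ ^ β / β :=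
          Real.log_one_add_le_log_two_add_rpow_div (norm_nonneg _) hβ
      _ ≤ Real.log 2 + (C * ‖x‖) ^ β / β := by gcongr; exact hf x
      _ = Real.log 2 + C ^ β / β * ‖x‖ ^ β := by
          rw [Real.mul_rpow hC (norm_nonneg _)]; ring
  calc ∫⁻ x, ENNReal.ofReal (Real.log (1 + ‖f x‖)) ∂μ
      ≤ ∫⁻ x, (ENNReal.ofReal (Real.log 2)
          + ENNReal.ofReal (C ^ β / β) * ENNReal.ofReal (‖x‖ ^ β)) ∂μ := lintegral_mono hpt
    _ = ENNReal.ofReal (Real.log 2) * μ Set.univ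
          + ENNReal.ofReal (C ^ β / β) * ∫⁻ x, ENNReal.ofReal (‖x‖ ^ β) ∂μ := by
        rw [lintegral_add_left measurable_const, lintegral_const,
          lintegral_const_mul' _ _ ENNReal.ofReal_ne_top]
    _ < ⊤ := ENNReal.add_lt_top.2
        ⟨by finiteness, ENNReal.mul_lt_top ENNReal.ofReal_lt_top hμ_mom⟩

end MeasureTheory

namespace Matrix

variable {ι : Type*} [Fintype ι] [DecidableEq ι]

def orthogonalMulVecEquiv {A : Matrix ι ι ℝ} (hA : A ∈ orthogonalGroup ι ℝ) :
    (ι → ℝ) ≃ᵐ (ι → ℝ) :=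
  (UnitaryGroup.toLinearEquiv ⟨A, hA⟩).toContinuousLinearEquiv.toHomeomorph.toMeasurableEquiv

@[simp]
lemma coe_orthogonalMulVecEquiv {A : Matrix ι ι ℝ} (hA : A ∈ orthogonalGroup ι ℝ) :
    ⇑(orthogonalMulVecEquiv hA) = A.mulVec := rfl

lemma abs_det_of_mem_orthogonalGroup {A : Matrix ι ι ℝ} (hA : A ∈ orthogonalGroup ι ℝ) :
    |A.det| = 1 := by
  have h : A.det * A.det = 1 := (det_of_mem_unitary hA).1
  rcases mul_self_eq_one_iff.1 h with h | h <;> simp [h]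

lemma measurePreserving_orthogonalMulVecEquiv {A : Matrix ι ι ℝ}
    (hA : A ∈ orthogonalGroup ι ℝ) :
    MeasurePreserving (orthogonalMulVecEquiv hA) volume volume := by
  have hdet := abs_det_of_mem_orthogonalGroup hA
  refine ⟨(orthogonalMulVecEquiv hA).measurable, ?_⟩
  have h := Real.map_matrix_volume_pi_eq_smul_volume_pi (M := A)
    (abs_ne_zero.1 (by simp [hdet]))
  rw [abs_inv, hdet, inv_one, ENNReal.ofReal_one, one_smul] at h
  exact h

end Matrix

namespace MeasurableEquiv

variable (α : Type*) [MeasurableSpace α] {n k : ℕ}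

def piFinCastLEProd (h : k ≤ n) :
    (Fin n → α) ≃ᵐ (Fin k → α) × ({i : Fin n // ¬ (i : ℕ) < k} → α) :=
  (piEquivPiSubtypeProd (fun _ => α) fun i : Fin n => (i : ℕ) < k).trans
    ((piCongrLeft (fun _ => α) (Fin.castLEquiv h)).symm.prodCongr (refl _))

variable {α}

@[simp]
lemma piFinCastLEProd_apply_fst (h : k ≤ n) (x : Fin n → α) :
    (piFinCastLEProd α h x).1 = fun j => x (Fin.castLE h j) :=
  rfl

lemma norm_piFinCastLEProd_snd_le {E : Type*} [SeminormedAddCommGroup E] [MeasurableSpace E]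
    (h : k ≤ n) (x : Fin n → E) : ‖(piFinCastLEProd E h x).2‖ ≤ ‖x‖ :=
  (pi_norm_le_iff_of_nonneg (norm_nonneg x)).2 fun i => norm_le_pi_norm x i

lemma volume_preserving_piFinCastLEProd (α : Type*) [MeasureSpace α]
    [SigmaFinite (volume : Measure α)] (h : k ≤ n) : MeasurePreserving (piFinCastLEProd α h) :=
  ((volume_measurePreserving_piCongrLeft (fun _ => α) (Fin.castLEquiv h)).symm.prod
    (MeasurePreserving.id volume)).comp (volume_preserving_piEquivPiSubtypeProd (fun _ => α) _)

end MeasurableEquiv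

theorem projection_absolutelyContinuous_diffEnt_lower_general
    {n k : ℕ} (hk : k < n)
    (μ : Measure (Fin n → ℝ)) [IsProbabilityMeasure μ]
    (hac : μ ≪ (volume : Measure (Fin n → ℝ)))
    (hhlow : ∫⁻ x, ENNReal.ofReal (Real.log ((μ.rnDeriv volume x).toReal)) ∂μ < ⊤)
    (α β : ℝ) (hα : 0 < α) (hβ : 0 < β)
    (hmom : ∫⁻ x, ENNReal.ofReal ((∑ i, |x i| ^ α) ^ (β / α)) ∂μ < ⊤)
    (V : Matrix (Fin n) (Fin n) ℝ) (hV : V ∈ Matrix.orthogonalGroup (Fin n) ℝ) :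
    (μ.map ((V.submatrix id (Fin.castLE hk.le)).transpose.mulVec)
        ≪ (volume : Measure (Fin k → ℝ)))
    ∧ ∫⁻ y, ENNReal.ofReal
          (Real.log (((μ.map ((V.submatrix id (Fin.castLE hk.le)).transpose.mulVec)).rnDeriv
            volume y).toReal))
        ∂(μ.map ((V.submatrix id (Fin.castLE hk.le)).transpose.mulVec)) < ⊤ := by
  have hVt : V.transpose ∈ Matrix.orthogonalGroup (Fin n) ℝ :=
    Matrix.transpose_mem_unitaryGroup_iff.2 hV
  set Φ := (Matrix.orthogonalMulVecEquiv hVt).trans (MeasurableEquiv.piFinCastLEProd ℝ hk.le)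
  have hΦ : MeasurePreserving Φ volume ((volume : Measure (Fin k → ℝ)).prod volume) :=
    (MeasurableEquiv.volume_preserving_piFinCastLEProd ℝ hk.le).comp
      (Matrix.measurePreserving_orthogonalMulVecEquiv hVt)
  have hproj : (V.submatrix id (Fin.castLE hk.le)).transpose.mulVec = Prod.fst ∘ Φ := by
    ext x j
    simp [Φ, Matrix.mulVec, dotProduct]
  have hμΦ : μ.map Φ ≪ (volume : Measure (Fin k → ℝ)).prod volume :=
    hΦ.map_eq ▸ hac.map Φ.measurable
  rw [hproj, ← Measure.map_map measurable_fst Φ.measurable]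
  refine ⟨hμΦ.map_fst, posLogDensityIntegral_map_fst_lt_top_of_log_moment hμΦ ?_ ?_⟩
  · rwa [hΦ.posLogDensityIntegral_map hac]
  · set L := LinearMap.toContinuousLinearMap (Matrix.toLin' V.transpose)
    rw [lintegral_map_equiv]
    refine lintegral_ofReal_log_one_add_norm_lt_top hβ (norm_nonneg L) (fun x => ?_)
      ((lintegral_mono fun x => ENNReal.ofReal_le_ofReal
        (pi_norm_rpow_le_sum_abs_rpow_rpow x hα hβ.le)).trans_lt hmom)
    exact (MeasurableEquiv.norm_piFinCastLEProd_snd_le hk.le _).trans (L.le_opNorm x)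

/-- **Statement 18.** Let `X` be an absolutely continuous random vector in `ℝ^n` with
`h(X) > −∞` (the positive part of `∫ log(dμ/dx) dμ` is finite) and `E‖X‖_α^β < ∞` for some
`α, β > 0`. If `V` is an `n × n` orthogonal matrix and `V_k` consists of its first `k`
columns (`1 ≤ k < n`), then `V_kᵀ X` is absolutely continuous on `ℝ^k` and
`h(V_kᵀ X) > −∞`. -/
theorem projection_absolutelyContinuous_diffEnt_lower
    {n k : ℕ} (hk1 : 1 ≤ k) (hk : k < n)
    (μ : Measure (Fin n → ℝ)) [IsProbabilityMeasure μ]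
    (hac : μ ≪ (volume : Measure (Fin n → ℝ)))
    (hhlow : ∫⁻ x, ENNReal.ofReal (Real.log ((μ.rnDeriv volume x).toReal)) ∂μ < ⊤)
    (α β : ℝ) (hα : 0 < α) (hβ : 0 < β)
    (hmom : ∫⁻ x, ENNReal.ofReal ((∑ i, |x i| ^ α) ^ (β / α)) ∂μ < ⊤)
    (V : Matrix (Fin n) (Fin n) ℝ) (hV : V ∈ Matrix.orthogonalGroup (Fin n) ℝ) :
    (μ.map ((V.submatrix id (Fin.castLE hk.le)).transpose.mulVec)
        ≪ (volume : Measure (Fin k → ℝ)))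
    ∧ ∫⁻ y, ENNReal.ofReal
          (Real.log (((μ.map ((V.submatrix id (Fin.castLE hk.le)).transpose.mulVec)).rnDeriv
            volume y).toReal))
        ∂(μ.map ((V.submatrix id (Fin.castLE hk.le)).transpose.mulVec)) < ⊤ :=
  projection_absolutelyContinuous_diffEnt_lower_general hk μ hac hhlow α β hα hβ hmom V hV

end
end
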